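/- Half-characteristic constants relations connecting the C sector with the A sector: θ[1,0;0,0](0,0) · θ[0,0;0,0](0,0) = 2 · ( Θ[1/2,0;0,0](0,0)² + Θ[1/2,1;0,0](0,0)² ) and θ[1,0;0,1](0,0) · θ[0,0;0,1](0,0) = 2 · ( Θ[1/2,0;0,0](0,0)² − Θ[1/2,1;0,0](0,0)² ). -/

import Mathlib

open Complex

/-- Genus-two theta function with real characteristics `a c b d`
(upper characteristics `a, c`, lower characteristics `b, d`),
moduli `τ₁ τ₂ τ₁₂` and complex arguments `x y`. -/
noncomputable def theta (τ₁ τ₂ τ₁₂ : ℂ) (a c b d : ℝ) (x y : ℂ) : ℂ :=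
  ∑' p : ℤ × ℤ,
    Complex.exp
      ((Real.pi : ℂ) * Complex.I *
          (τ₁ * ((p.1 : ℂ) + (a : ℂ) / 2) ^ 2 + τ₂ * ((p.2 : ℂ) + (c : ℂ) / 2) ^ 2 +
            2 * τ₁₂ * ((p.1 : ℂ) + (a : ℂ) / 2) * ((p.2 : ℂ) + (c : ℂ) / 2)) +
        2 * (Real.pi : ℂ) * Complex.I *
          (((p.1 : ℂ) + (a : ℂ) / 2) * (x + (b : ℂ) / 2) +
            ((p.2 : ℂ) + (c : ℂ) / 2) * (y + (d : ℂ) / 2)))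

/-- The same theta function with doubled moduli `2τ₁, 2τ₂, 2τ₁₂`. -/
noncomputable def Theta2 (τ₁ τ₂ τ₁₂ : ℂ) (a c b d : ℝ) (x y : ℂ) : ℂ :=
  theta (2 * τ₁) (2 * τ₂) (2 * τ₁₂) a c b d x y

/-!
The summands of two theta constants at lattice points `u` and `v` multiply, by the parallelogram
law `Q u + Q v = 2 Q ((u + v) / 2) + 2 Q ((u - v) / 2)` for the quadratic form `Q` of the moduli,
to a product of two summands with doubled moduli at `(u + v) / 2` and `(u - v) / 2`. Sorting the
pairs of lattice points by the parities of the sums of their coordinates makes this a bijection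
and gives the addition formula `θ[α] θ[α'] = Σ_{ε, δ} Θ[(α + α')/2 + (ε, δ)] Θ[(α - α')/2 + (ε, δ)]`.
In the case at hand, the reflection `u ↦ -u` identifies `Θ[3/2, δ]` with `Θ[1/2, δ]`, and the
lower characteristic `2` contributes the sign `(-1)^δ`.
-/

open Real

namespace GenusTwoTheta

section Terms

variable (τ₁ τ₂ τ₁₂ : ℂ)

/-- The summand of a theta constant at the lattice point `u = (m + a/2, n + c/2)`, with
`β = (b/2, d/2)` the halved lower characteristic. -/
noncomputable def gaussTerm (u₁ u₂ β₁ β₂ : ℝ) : ℂ :=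
  cexp (π * I * (τ₁ * u₁ ^ 2 + τ₂ * u₂ ^ 2 + 2 * τ₁₂ * u₁ * u₂) +
    2 * π * I * (u₁ * β₁ + u₂ * β₂))

theorem theta_zero_zero_eq_tsum (a c b d : ℝ) :
    theta τ₁ τ₂ τ₁₂ a c b d 0 0 =
      ∑' p : ℤ × ℤ, gaussTerm τ₁ τ₂ τ₁₂ (p.1 + a / 2) (p.2 + c / 2) (b / 2) (d / 2) := by
  refine tsum_congr fun p => ?_
  rw [gaussTerm]
  congr 1
  push_cast
  ring

theorem gaussTerm_mul_gaussTerm (u₁ u₂ β₁ β₂ v₁ v₂ γ₁ γ₂ : ℝ) :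
    gaussTerm τ₁ τ₂ τ₁₂ u₁ u₂ β₁ β₂ * gaussTerm τ₁ τ₂ τ₁₂ v₁ v₂ γ₁ γ₂ =
      gaussTerm (2 * τ₁) (2 * τ₂) (2 * τ₁₂) ((u₁ + v₁) / 2) ((u₂ + v₂) / 2) (β₁ + γ₁) (β₂ + γ₂) *
        gaussTerm (2 * τ₁) (2 * τ₂) (2 * τ₁₂) ((u₁ - v₁) / 2) ((u₂ - v₂) / 2)
          (β₁ - γ₁) (β₂ - γ₂) := by
  simp only [gaussTerm, ← Complex.exp_add]
  congr 1
  push_cast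
  ring

theorem norm_gaussTerm (u₁ u₂ β₁ β₂ : ℝ) :
    ‖gaussTerm τ₁ τ₂ τ₁₂ u₁ u₂ β₁ β₂‖ =
      rexp (-π * (τ₁.im * u₁ ^ 2 + τ₂.im * u₂ ^ 2 + 2 * τ₁₂.im * u₁ * u₂)) := by
  rw [gaussTerm, norm_exp]
  congr 1
  simp [← Complex.ofReal_pow]

theorem theta_reflect {a c a' c' : ℝ} (k l : ℤ) (ha : a + a' = 2 * k) (hc : c + c' = 2 * l)
    (b d : ℝ) (x y : ℂ) :
    theta τ₁ τ₂ τ₁₂ a' c' (-b) (-d) (-x) (-y) = theta τ₁ τ₂ τ₁₂ a c b d x y := by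
  obtain rfl : a' = 2 * k - a := by linarith
  obtain rfl : c' = 2 * l - c := by linarith
  rw [theta, theta, ← ((Equiv.neg (ℤ × ℤ)).trans (Equiv.subRight (k, l))).tsum_eq]
  refine tsum_congr fun p => ?_
  simp only [Equiv.trans_apply, Equiv.neg_apply, Equiv.subRight_apply, Prod.fst_sub,
    Prod.snd_sub, Prod.fst_neg, Prod.snd_neg]
  congr 1
  push_cast
  ring

theorem theta_lower_snd_add_two (a c b d : ℝ) (x y : ℂ) :
    theta τ₁ τ₂ τ₁₂ a c b (d + 2) x y = cexp (π * I * c) * theta τ₁ τ₂ τ₁₂ a c b d x y := by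
  rw [theta, theta, ← tsum_mul_left]
  refine tsum_congr fun p => ?_
  rw [← Complex.exp_add]
  exact Complex.exp_eq_exp_iff_exists_int.mpr ⟨p.2, by push_cast; ring⟩

end Terms

theorem summable_exp_neg_mul_int_add_sq {k : ℝ} (hk : 0 < k) (r : ℝ) :
    Summable fun n : ℤ => rexp (-(k * (n + r) ^ 2)) := by
  have h := ((summable_jacobiTheta₂_term_iff (↑(k * r / π) * I) (↑(k / π) * I)).mpr
    (by simpa using div_pos hk pi_pos)).norm.mul_left (rexp (-(k * r ^ 2)))
  refine h.congr fun n => ?_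
  rw [norm_jacobiTheta₂_term, ← Real.exp_add, mul_I_im, mul_I_im, ofReal_re, ofReal_re]
  congr 1
  field_simp
  ring

theorem exists_pos_mul_sq_add_sq_le {t₁ t₂ t : ℝ} (h₁ : 0 < t₁) (h₂ : 0 < t₂)
    (h : t ^ 2 < t₁ * t₂) :
    ∃ k > 0, ∀ X Y : ℝ, k * (X ^ 2 + Y ^ 2) ≤ t₁ * X ^ 2 + t₂ * Y ^ 2 + 2 * t * X * Y := by
  refine ⟨(t₁ * t₂ - t ^ 2) / (2 * (t₁ + t₂)), by apply div_pos <;> linarith, fun X Y => ?_⟩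
  rw [div_mul_eq_mul_div, div_le_iff₀ (by linarith)]
  nlinarith [sq_nonneg (t₁ * X + t * Y), sq_nonneg (t₂ * Y + t * X), sq_nonneg X, sq_nonneg Y]

section Summation

variable {τ₁ τ₂ τ₁₂ : ℂ}

theorem summable_norm_gaussTerm (hτ₁ : 0 < τ₁.im) (hτ₂ : 0 < τ₂.im)
    (hτ : τ₁₂.im ^ 2 < τ₁.im * τ₂.im) (r s β₁ β₂ : ℝ) :
    Summable fun p : ℤ × ℤ => ‖gaussTerm τ₁ τ₂ τ₁₂ (p.1 + r) (p.2 + s) β₁ β₂‖ := by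
  obtain ⟨k, hk, hQ⟩ := exists_pos_mul_sq_add_sq_le hτ₁ hτ₂ hτ
  have hπk : 0 < π * k := mul_pos pi_pos hk
  refine Summable.of_nonneg_of_le (fun _ => norm_nonneg _) (fun p => ?_)
    ((summable_exp_neg_mul_int_add_sq hπk r).mul_of_nonneg
      (summable_exp_neg_mul_int_add_sq hπk s) (fun _ => (exp_pos _).le) (fun _ => (exp_pos _).le))
  rw [norm_gaussTerm, ← Real.exp_add, Real.exp_le_exp]
  nlinarith [mul_le_mul_of_nonneg_left (hQ (p.1 + r) (p.2 + s)) pi_pos.le]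

/-- Since `m + p ≡ m - p (mod 2)`, a pair `((m, n), (p, q))` is determined by the common parities
`(ε, δ)` and the halves of `m ± p - ε` and `n ± q - δ`. -/
def sumDiffEquiv : (Fin 2 × Fin 2) × (ℤ × ℤ) × (ℤ × ℤ) ≃ (ℤ × ℤ) × (ℤ × ℤ) where
  toFun := fun ⟨(ε, δ), (J, S), (K, T)⟩ => ((J + K + ε, S + T + δ), (J - K, S - T))
  invFun := fun ⟨(m, n), (p, q)⟩ =>
    ((⟨((m + p) % 2).toNat, by omega⟩, ⟨((n + q) % 2).toNat, by omega⟩),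
      ((m + p) / 2, (n + q) / 2), ((m - p) / 2, (n - q) / 2))
  left_inv := by
    rintro ⟨⟨ε, δ⟩, ⟨J, S⟩, ⟨K, T⟩⟩
    ext <;> simp only <;> omega
  right_inv := by
    rintro ⟨⟨m, n⟩, ⟨p, q⟩⟩
    ext <;> simp only <;> omega

theorem tsum_mul_tsum_eq_sum_of_equiv {R ι κ κ' α β : Type*} [NormedRing R] [CompleteSpace R]
    [Fintype ι] (e : ι × κ × κ' ≃ α × β) {f : α → R} {g : β → R} {F : ι → κ → R}
    {G : ι → κ' → R} (hf : Summable (‖f ·‖)) (hg : Summable (‖g ·‖))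
    (hF : ∀ i, Summable (‖F i ·‖)) (hG : ∀ i, Summable (‖G i ·‖))
    (h : ∀ i j k, f (e (i, j, k)).1 * g (e (i, j, k)).2 = F i j * G i k) :
    (∑' a, f a) * (∑' b, g b) = ∑ i, (∑' j, F i j) * (∑' k, G i k) := by
  have hsum : Summable fun x : ι × κ × κ' => F x.1 x.2.1 * G x.1 x.2.2 :=
    (e.summable_iff.mpr (summable_mul_of_summable_norm hf hg)).congr fun x => h _ _ _
  calc (∑' a, f a) * (∑' b, g b) = ∑' x, f (e x).1 * g (e x).2 := by
        rw [tsum_mul_tsum_of_summable_norm hf hg, e.tsum_eq (fun y => f y.1 * g y.2)]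
    _ = ∑' x : ι × κ × κ', F x.1 x.2.1 * G x.1 x.2.2 := tsum_congr fun x => h _ _ _
    _ = ∑ i, ∑' y : κ × κ', F i y.1 * G i y.2 := by rw [hsum.tsum_prod, tsum_fintype]
    _ = ∑ i, (∑' j, F i j) * (∑' k, G i k) := by
        simp_rw [tsum_mul_tsum_of_summable_norm (hF _) (hG _)]

theorem theta_mul_theta (hτ₁ : 0 < τ₁.im) (hτ₂ : 0 < τ₂.im)
    (hτ : τ₁₂.im ^ 2 < τ₁.im * τ₂.im) (a c b d a' c' b' d' : ℝ) :
    theta τ₁ τ₂ τ₁₂ a c b d 0 0 * theta τ₁ τ₂ τ₁₂ a' c' b' d' 0 0 =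
      ∑ e : Fin 2 × Fin 2,
        Theta2 τ₁ τ₂ τ₁₂ ((a + a') / 2 + e.1) ((c + c') / 2 + e.2) (b + b') (d + d') 0 0 *
          Theta2 τ₁ τ₂ τ₁₂ ((a - a') / 2 + e.1) ((c - c') / 2 + e.2) (b - b') (d - d') 0 0 := by
  have hΘ := summable_norm_gaussTerm (τ₁ := 2 * τ₁) (τ₂ := 2 * τ₂) (τ₁₂ := 2 * τ₁₂)
    (by simpa) (by simpa) (by simp only [mul_im, re_ofNat, im_ofNat, zero_mul, add_zero]; nlinarith)
  simp only [Theta2, theta_zero_zero_eq_tsum]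
  refine tsum_mul_tsum_eq_sum_of_equiv sumDiffEquiv (summable_norm_gaussTerm hτ₁ hτ₂ hτ _ _ _ _)
    (summable_norm_gaussTerm hτ₁ hτ₂ hτ _ _ _ _) (fun _ => hΘ _ _ _ _) (fun _ => hΘ _ _ _ _) ?_
  rintro ⟨ε, δ⟩ ⟨J, S⟩ ⟨K, T⟩
  rw [gaussTerm_mul_gaussTerm]
  simp only [sumDiffEquiv, Equiv.coe_fn_mk]
  congr 1 <;> congr 1 <;> push_cast <;> ring

end Summation

end GenusTwoTheta

open GenusTwoTheta in
theorem half_characteristic_constants_CA (τ₁ τ₂ τ₁₂ : ℂ)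
    (hτ₁ : 0 < τ₁.im) (hτ₂ : 0 < τ₂.im) (hτ : τ₁₂.im ^ 2 < τ₁.im * τ₂.im) :
    theta τ₁ τ₂ τ₁₂ 1 0 0 0 0 0 * theta τ₁ τ₂ τ₁₂ 0 0 0 0 0 0 =
        2 * (Theta2 τ₁ τ₂ τ₁₂ (1/2) 0 0 0 0 0 ^ 2 +
          Theta2 τ₁ τ₂ τ₁₂ (1/2) 1 0 0 0 0 ^ 2) ∧
      theta τ₁ τ₂ τ₁₂ 1 0 0 1 0 0 * theta τ₁ τ₂ τ₁₂ 0 0 0 1 0 0 =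
        2 * (Theta2 τ₁ τ₂ τ₁₂ (1/2) 0 0 0 0 0 ^ 2 -
          Theta2 τ₁ τ₂ τ₁₂ (1/2) 1 0 0 0 0 ^ 2) := by
  have h₀ := theta_mul_theta hτ₁ hτ₂ hτ 1 0 0 0 0 0 0 0
  have h₁ := theta_mul_theta hτ₁ hτ₂ hτ 1 0 0 1 0 0 0 1
  simp only [Fintype.sum_prod_type, Fin.sum_univ_two] at h₀ h₁
  norm_num at h₀ h₁
  have hrefl (l : ℤ) : Theta2 τ₁ τ₂ τ₁₂ (3 / 2) l 0 0 0 0 = Theta2 τ₁ τ₂ τ₁₂ (1 / 2) l 0 0 0 0 := by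
    have h := theta_reflect (2 * τ₁) (2 * τ₂) (2 * τ₁₂) (a := 1 / 2) (a' := 3 / 2) 1 l
      (by norm_num) (two_mul _).symm 0 0 0 0
    simp only [neg_zero] at h
    exact h
  have hshift (A C : ℝ) :
      Theta2 τ₁ τ₂ τ₁₂ A C 0 2 0 0 = cexp (π * I * C) * Theta2 τ₁ τ₂ τ₁₂ A C 0 0 0 0 := by
    have h := theta_lower_snd_add_two (2 * τ₁) (2 * τ₂) (2 * τ₁₂) A C 0 0 0 0
    rwa [zero_add] at h
  have h₃₀ := hrefl 0
  have h₃₁ := hrefl 1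
  push_cast at h₃₀ h₃₁
  simp only [hshift, h₃₀, h₃₁, ofReal_zero, ofReal_one, mul_zero, Complex.exp_zero, mul_one,
    Complex.exp_pi_mul_I] at h₀ h₁
  constructor
  · linear_combination h₀
  · linear_combination h₁
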